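/- Let 0 < q < 1, let ν be a positive integer, let z ∈ ℂ, and let H : ℂ → ℂ be a function that is continuous at 0 and satisfies H(0) = −((1−q)^ν/log q)·(ν−1)! and H(q·t) = e^{−t}·( H(t) + t^ν·q^{ν(1−z)}·e^{t·[1−z]_q} ) for all t ∈ ℂ. Then H(t) = −((1−q)^ν/log q)·(ν−1)!·e^{t/(1−q)} − F_q^{−,ν}(t,z) for every t ∈ ℂ. -/

import Mathlib

/-!
Put `c := -((1-q)^ν / log q)·(ν-1)!` and `P(t) := c·e^{t/(1-q)} - F_q^{-,ν}(t,z)`. Replacing `t` by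
`q t` shifts the summation index of `F_q^{-,ν}` by one, so `P` satisfies the same inhomogeneous
`q`-difference equation as `H`, the dropped first term of the series being the inhomogeneity.
Hence `D := H - P` satisfies `D(q s) = e^{-s} D(s)`; it is continuous at `0` with `D(0) = 0`
(the factor `t^ν`, `ν > 0`, makes `F_q^{-,ν}` vanish at `0`). Iterating,
`D(qⁿ t) = exp(-t(1 + q + ⋯ + q^{n-1})) D(t)`, and `n → ∞` gives `0 = e^{-t/(1-q)} D(t)`.
-/

open Complex

/-- `q^w := exp(w · log q)` with the real logarithm of `q`. -/
noncomputable def qpow (q : ℝ) (w : ℂ) : ℂ := Complex.exp (w * Real.log q)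

/-- `[w]_q := (1 - q^w)/(1 - q)`. -/
noncomputable def qbr (q : ℝ) (w : ℂ) : ℂ := (1 - qpow q w) / (1 - (q : ℂ))

/-- the term of index `n+1` of the series defining `F_q^{-,ν}(t,z)`. -/
noncomputable def FmTerm (q : ℝ) (ν : ℕ) (t z : ℂ) (n : ℕ) : ℂ :=
  qpow q ((ν : ℂ) * (((n : ℂ) + 1) - z)) * Complex.exp (t * qbr q (((n : ℂ) + 1) - z))

/-- `F_q^{-,ν}(t,z)`. -/
noncomputable def Fm (q : ℝ) (ν : ℕ) (t z : ℂ) : ℂ := t ^ ν * ∑' n : ℕ, FmTerm q ν t z n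

open Filter Topology

theorem eq_zero_of_apply_mul_eq_exp_neg_mul {q : ℂ} (hq : ‖q‖ < 1) {D : ℂ → ℂ}
    (hD : ContinuousAt D 0) (hD0 : D 0 = 0) (hfe : ∀ s, D (q * s) = exp (-s) * D s) (t : ℂ) :
    D t = 0 := by
  have hiter : ∀ n : ℕ, D (q ^ n * t) = exp (-(t * ∑ k ∈ Finset.range n, q ^ k)) * D t := by
    intro n
    induction n with
    | zero => simp
    | succ n ih =>
      rw [pow_succ', mul_assoc, hfe, ih, ← mul_assoc, ← exp_add, Finset.sum_range_succ]
      ring_nf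
  have hlim_left : Tendsto (fun n : ℕ => D (q ^ n * t)) atTop (𝓝 0) := by
    rw [← hD0]
    refine hD.tendsto.comp ?_
    simpa using (tendsto_pow_atTop_nhds_zero_of_norm_lt_one hq).mul_const t
  have hlim_right : Tendsto (fun n : ℕ => D (q ^ n * t)) atTop
      (𝓝 (exp (-(t * (1 - q)⁻¹)) * D t)) := by
    simp only [hiter]
    exact ((continuous_exp.tendsto _).comp
      ((hasSum_geometric_of_norm_lt_one hq).tendsto_sum_nat.const_mul t).neg).mul_const _
  simpa [exp_ne_zero] using tendsto_nhds_unique hlim_right hlim_left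

section QCalculus

variable {q : ℝ}

theorem qpow_add (a b : ℂ) : qpow q (a + b) = qpow q a * qpow q b := by
  simp [qpow, add_mul, exp_add]

theorem qpow_natCast (hq0 : 0 < q) (n : ℕ) : qpow q n = (q : ℂ) ^ n := by
  rw [qpow, exp_nat_mul, ← ofReal_exp, Real.exp_log hq0]

theorem qpow_natCast_add (hq0 : 0 < q) (n : ℕ) (w : ℂ) :
    qpow q (n + w) = (q : ℂ) ^ n * qpow q w := by
  rw [qpow_add, qpow_natCast hq0]

theorem qbr_add_one (hq0 : 0 < q) (hq1 : q < 1) (w : ℂ) :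
    qbr q (w + 1) = q * qbr q w + 1 := by
  have hne : (1 : ℂ) - q ≠ 0 := sub_ne_zero.mpr (by exact_mod_cast hq1.ne')
  have hshift : qpow q (w + 1) = q * qpow q w := by
    simpa [add_comm] using qpow_natCast_add hq0 1 w
  rw [qbr, qbr, hshift, mul_div_assoc', div_add_one hne]
  ring

theorem norm_qbr_natCast_add_le (hq0 : 0 < q) (hq1 : q < 1) (n : ℕ) (w : ℂ) :
    ‖qbr q (n + w)‖ ≤ (1 + ‖qpow q w‖) / (1 - q) := by
  have hden : ‖(1 : ℂ) - q‖ = 1 - q := by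
    rw [← ofReal_one, ← ofReal_sub, norm_real, Real.norm_of_nonneg (by linarith)]
  have hqn : ‖(q : ℂ) ^ n‖ ≤ 1 := by
    rw [norm_pow, norm_real, Real.norm_of_nonneg hq0.le]
    exact pow_le_one₀ hq0.le hq1.le
  rw [qbr, norm_div, hden, qpow_natCast_add hq0]
  gcongr
  calc ‖1 - (q : ℂ) ^ n * qpow q w‖ ≤ 1 + ‖(q : ℂ) ^ n‖ * ‖qpow q w‖ := by
        simpa using norm_sub_le (1 : ℂ) ((q : ℂ) ^ n * qpow q w)
    _ ≤ 1 + ‖qpow q w‖ := by gcongr; exact mul_le_of_le_one_left (norm_nonneg _) hqn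

end QCalculus

section SeriesFm

variable {q : ℝ} {ν : ℕ} {z : ℂ}

theorem FmTerm_zero (t : ℂ) :
    FmTerm q ν t z 0 = qpow q (ν * (1 - z)) * exp (t * qbr q (1 - z)) := by
  simp [FmTerm]

theorem mul_pow_mul_FmTerm (hq0 : 0 < q) (hq1 : q < 1) (t : ℂ) (n : ℕ) :
    ((q : ℂ) * t) ^ ν * FmTerm q ν (q * t) z n = exp (-t) * (t ^ ν * FmTerm q ν t z (n + 1)) := by
  have hpow : (ν : ℂ) * (((n + 1 : ℕ) : ℂ) + 1 - z) = ν + ν * ((n : ℂ) + 1 - z) := by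
    push_cast; ring
  have hbr : ((n + 1 : ℕ) : ℂ) + 1 - z = ((n : ℂ) + 1 - z) + 1 := by push_cast; ring
  rw [FmTerm, FmTerm, hpow, hbr, qpow_natCast_add hq0, qbr_add_one hq0 hq1, mul_add, mul_one,
    exp_add, exp_neg]
  field_simp
  ring

theorem norm_FmTerm_le (hq0 : 0 < q) (hq1 : q < 1) {t : ℂ} {R : ℝ} (hR : ‖t‖ ≤ R) (n : ℕ) :
    ‖FmTerm q ν t z n‖ ≤
      ‖qpow q (ν * (1 - z))‖ * Real.exp (R * ((1 + ‖qpow q (1 - z)‖) / (1 - q))) * (q ^ ν) ^ n := by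
  have hpow : qpow q (ν * ((n : ℂ) + 1 - z)) = ((q : ℂ) ^ ν) ^ n * qpow q (ν * (1 - z)) := by
    rw [← pow_mul, ← qpow_natCast_add hq0]; push_cast; ring_nf
  have hexp : ‖exp (t * qbr q ((n : ℂ) + 1 - z))‖ ≤
      Real.exp (R * ((1 + ‖qpow q (1 - z)‖) / (1 - q))) := by
    rw [norm_exp, Real.exp_le_exp]
    calc (t * qbr q ((n : ℂ) + 1 - z)).re ≤ ‖t‖ * ‖qbr q (n + (1 - z))‖ := by
          rw [← norm_mul, add_sub_assoc]; exact re_le_norm _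
      _ ≤ R * ((1 + ‖qpow q (1 - z)‖) / (1 - q)) :=
          mul_le_mul hR (norm_qbr_natCast_add_le hq0 hq1 n _) (norm_nonneg _)
            ((norm_nonneg t).trans hR)
  rw [FmTerm, norm_mul, hpow, norm_mul, norm_pow, norm_pow, norm_real,
    Real.norm_of_nonneg hq0.le]
  exact (mul_le_mul_of_nonneg_left hexp (by positivity)).trans_eq (by ring)

theorem norm_tsum_FmTerm_le (hq0 : 0 < q) (hq1 : q < 1) (hν : ν ≠ 0) {t : ℂ} {R : ℝ}
    (hR : ‖t‖ ≤ R) :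
    ‖∑' n, FmTerm q ν t z n‖ ≤ ‖qpow q (ν * (1 - z))‖ *
      Real.exp (R * ((1 + ‖qpow q (1 - z)‖) / (1 - q))) * (1 - q ^ ν)⁻¹ :=
  tsum_of_norm_bounded ((hasSum_geometric_of_lt_one (by positivity)
    (pow_lt_one₀ hq0.le hq1 hν)).mul_left _) (norm_FmTerm_le hq0 hq1 hR)

theorem summable_FmTerm (hq0 : 0 < q) (hq1 : q < 1) (hν : ν ≠ 0) (t : ℂ) :
    Summable (FmTerm q ν t z) :=
  Summable.of_norm_bounded ((summable_geometric_of_lt_one (by positivity)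
    (pow_lt_one₀ hq0.le hq1 hν)).mul_left _) (norm_FmTerm_le hq0 hq1 le_rfl)

theorem Fm_ofReal_mul (hq0 : 0 < q) (hq1 : q < 1) (hν : ν ≠ 0) (t : ℂ) :
    Fm q ν (q * t) z = exp (-t) * (Fm q ν t z - t ^ ν * FmTerm q ν t z 0) := by
  rw [Fm, ← tsum_mul_left, tsum_congr (mul_pow_mul_FmTerm hq0 hq1 t), tsum_mul_left,
    tsum_mul_left, Fm, (summable_FmTerm hq0 hq1 hν t).tsum_eq_zero_add]
  ring

theorem continuousAt_Fm_zero (hq0 : 0 < q) (hq1 : q < 1) (hν : ν ≠ 0) :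
    ContinuousAt (fun t => Fm q ν t z) 0 := by
  set K := ‖qpow q (ν * (1 - z))‖ * Real.exp (1 * ((1 + ‖qpow q (1 - z)‖) / (1 - q))) *
    (1 - q ^ ν)⁻¹
  have hbound : ∀ᶠ t in 𝓝 (0 : ℂ), ‖Fm q ν t z‖ ≤ ‖t‖ ^ ν * K := by
    filter_upwards [Metric.closedBall_mem_nhds (0 : ℂ) one_pos] with t ht
    rw [Fm, norm_mul, norm_pow]
    gcongr
    exact norm_tsum_FmTerm_le hq0 hq1 hν (mem_closedBall_zero_iff.mp ht)
  have hK : Tendsto (fun t : ℂ => ‖t‖ ^ ν * K) (𝓝 0) (𝓝 (‖(0 : ℂ)‖ ^ ν * K)) :=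
    ((continuous_norm.pow ν).mul continuous_const).tendsto 0
  simpa [ContinuousAt, Fm, hν] using squeeze_zero_norm' hbound (by simpa [hν] using hK)

end SeriesFm

theorem stmt11 (q : ℝ) (hq0 : 0 < q) (hq1 : q < 1) (ν : ℕ) (hν : 0 < ν) (z : ℂ)
    (H : ℂ → ℂ) (Hcont : ContinuousAt H 0)
    (H0 : H 0 = -((((1 - q) ^ ν : ℝ) : ℂ) / (Real.log q : ℂ)) * (Nat.factorial (ν - 1) : ℂ))
    (Hfe : ∀ t : ℂ, H ((q : ℂ) * t) =
      Complex.exp (-t) *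
        (H t + t ^ ν * qpow q ((ν : ℂ) * (1 - z)) * Complex.exp (t * qbr q (1 - z)))) :
    ∀ t : ℂ, H t =
      -((((1 - q) ^ ν : ℝ) : ℂ) / (Real.log q : ℂ)) * (Nat.factorial (ν - 1) : ℂ) *
        Complex.exp (t / (1 - (q : ℂ))) - Fm q ν t z := by
  set c : ℂ := -((((1 - q) ^ ν : ℝ) : ℂ) / (Real.log q : ℂ)) * (Nat.factorial (ν - 1) : ℂ)
  have hne : (1 : ℂ) - q ≠ 0 := sub_ne_zero.mpr (by exact_mod_cast hq1.ne')
  have hexp : ∀ s : ℂ, exp (q * s / (1 - q)) = exp (-s) * exp (s / (1 - q)) := by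
    intro s
    rw [← exp_add]
    congr 1
    field_simp
    ring
  have hq : ‖(q : ℂ)‖ < 1 := by rwa [norm_real, Real.norm_of_nonneg hq0.le]
  refine fun t => sub_eq_zero.mp <| eq_zero_of_apply_mul_eq_exp_neg_mul hq
    (D := fun s => H s - (c * exp (s / (1 - q)) - Fm q ν s z)) ?_ ?_ (fun s => ?_) t
  · have hcexp : Continuous fun s : ℂ => c * exp (s / (1 - q)) := by fun_prop
    exact Hcont.sub (hcexp.continuousAt.sub (continuousAt_Fm_zero hq0 hq1 hν.ne'))
  · simp [H0, c, Fm, hν.ne']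
  · rw [Hfe, Fm_ofReal_mul hq0 hq1 hν.ne', FmTerm_zero, hexp]
    ring
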